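/- arXiv:2510.16006 — 3 statements merged into one kernel-verified Lean document; each statement's English description precedes it below -/
import Mathlib

section
/- If S is an aperiodic measure-preserving automorphism of a standard probability space (X, μ), then for every ε > 0 and every natural number N ≥ 1 there exists a measurable set B ⊆ X such that the sets B, S(B), ..., S^{N-1}(B) are pairwise disjoint and μ(B ∪ S(B) ∪ ... ∪ S^{N-1}(B)) > 1 - ε. -/
open MeasureTheory Set

/-- A measure-preserving automorphism of `(X, μ)`. -/
structure Aut (X : Type*) [MeasurableSpace X] (μ : Measure X) where
  toEquiv : X ≃ᵐ X
  mp : MeasurePreserving toEquiv μ μ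

namespace Aut

variable {X : Type*} [MeasurableSpace X] {μ : Measure X}

/-- The identity automorphism. -/
def id (μ : Measure X) : Aut X μ := ⟨MeasurableEquiv.refl X, MeasurePreserving.id μ⟩

/-- Composition of automorphisms: `(a.comp b) x = a (b x)`. -/
def comp (a b : Aut X μ) : Aut X μ :=
  ⟨b.toEquiv.trans a.toEquiv, a.mp.comp b.mp⟩

/-- Inverse automorphism. -/
def inv (a : Aut X μ) : Aut X μ := ⟨a.toEquiv.symm, a.mp.symm a.toEquiv⟩

end Aut

/-- The Halmos (pseudo)metric on `Aut X μ` associated with a fixed family `A`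
of measurable sets (dense in the measure algebra):
`ρ(S,T) = Σ_i 2^{-i} (μ(S A_i Δ T A_i) + μ(S⁻¹ A_i Δ T⁻¹ A_i))`. -/
noncomputable def halmos {X : Type*} [MeasurableSpace X] {μ : Measure X}
    (A : ℕ → Set X) (S T : Aut X μ) : ℝ :=
  ∑' i : ℕ, (1 / 2 : ℝ) ^ i *
    ((μ (symmDiff (S.toEquiv '' A i) (T.toEquiv '' A i))).toReal +
     (μ (symmDiff (S.toEquiv.symm '' A i) (T.toEquiv.symm '' A i))).toReal)

/-- A skew product over `S`: an automorphism `R` of the product space together with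
a measurable family of fiber automorphisms `T x` such that `R(x,y) = (Sx, T_x y)`. -/
structure SkewExt {X : Type*} [MeasurableSpace X] {μ : Measure X} (S : Aut X μ) where
  T : X → Aut X μ
  prod : Aut (X × X) (μ.prod μ)
  spec : ∀ p : X × X, prod.toEquiv p = (S.toEquiv p.1, (T p.1).toEquiv p.2)

/-- `R ∈ Ext(S)`: `R` is a skew product over `S` for some measurable family of fibers. -/
def IsSkewProduct {X : Type*} [MeasurableSpace X] {μ : Measure X}
    (S : Aut X μ) (R : Aut (X × X) (μ.prod μ)) : Prop :=
  ∃ T : X → Aut X μ, ∀ p : X × X, R.toEquiv p = (S.toEquiv p.1, (T p.1).toEquiv p.2)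

/-- The `n`-step cocycle `C(x,n,R) = T_{S^{n-1}x} ∘ ⋯ ∘ T_{Sx} ∘ T_x`. -/
noncomputable def cocycle {X : Type*} [MeasurableSpace X] {μ : Measure X}
    (S : Aut X μ) (T : X → Aut X μ) (x : X) : ℕ → Aut X μ
  | 0 => Aut.id μ
  | n + 1 => (T (S.toEquiv^[n] x)).comp (cocycle S T x n)

/-- Openness of a set with respect to a (pseudo)metric `d`. -/
def IsOpenWrt {Z : Type*} (d : Z → Z → ℝ) (U : Set Z) : Prop :=
  ∀ z ∈ U, ∃ ε > (0 : ℝ), ∀ w, d z w < ε → w ∈ U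

/-- `D` is a `G_δ` set with respect to the (pseudo)metric `d`. -/
def IsGdeltaWrt {Z : Type*} (d : Z → Z → ℝ) (D : Set Z) : Prop :=
  ∃ U : ℕ → Set Z, (∀ k, IsOpenWrt d (U k)) ∧ D = ⋂ k, U k

/-- `D` is dense with respect to the (pseudo)metric `d`. -/
def IsDenseWrt {Z : Type*} (d : Z → Z → ℝ) (D : Set Z) : Prop :=
  ∀ z : Z, ∀ ε > (0 : ℝ), ∃ w ∈ D, d z w < ε

/-- `S` is aperiodic: for every `n ≥ 1` the set of `n`-periodic points is null. -/
def Aperiodic {X : Type*} [MeasurableSpace X] {μ : Measure X} (S : Aut X μ) : Prop :=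
  ∀ n : ℕ, 1 ≤ n → μ {x : X | S.toEquiv^[n] x = x} = 0

/-- The trivial extension `S × Id`. -/
def prodId {X : Type*} [MeasurableSpace X] {μ : Measure X} [SFinite μ] (S : Aut X μ) :
    Aut (X × X) (μ.prod μ) :=
  ⟨S.toEquiv.prodCongr (MeasurableEquiv.refl X), S.mp.prod (MeasurePreserving.id μ)⟩

/-- Membership in `𝒥`: automorphisms of the product leaving every `A × X` invariant. -/
def MemJ {X : Type*} [MeasurableSpace X] {μ : Measure X}
    (J : Aut (X × X) (μ.prod μ)) : Prop :=
  ∀ A : Set X, MeasurableSet A → J.toEquiv '' (A ×ˢ (univ : Set X)) = A ×ˢ (univ : Set X)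


/-!
Aperiodicity makes `x, T x, …, T^[n-1] x` distinct for almost every `x`, so a countable
separating family of measurable sets covers `X`, up to a null set, by countably many sets `G`
with `G, T⁻¹ G, …, T^{-(n-1)} G` pairwise disjoint. Adding these greedily, each time without the
points already within `n` steps (forwards or backwards) of the set built so far, gives such a
set `E` whose `n`-step neighbourhood is conull. Hence `μ E ≤ 1 / n` by disjointness, and
almost every point enters `E` in the future. Keeping the points whose first entry time into `E` is `≡ N - 1`
modulo `N` gives a base `B` of a tower `B, T⁻¹ B, …, T^{-(N-1)} B` which misses only the
points entering `E` in fewer than `N - 1` steps, a set of measure `≤ (N - 1) / n`.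
Applied to `T = S⁻¹` this is the statement.
-/

open Function
open scoped ENNReal

section Tower

variable {X : Type*}

def IsTowerBase (f : X → X) (n : ℕ) (E : Set X) : Prop :=
  ∀ k, 0 < k → k < n → Disjoint E (f^[k] ⁻¹' E)

namespace IsTowerBase

variable {f : X → X} {n : ℕ} {E : Set X}

theorem disjoint_preimage_iterate (h : IsTowerBase f n E) {i j : ℕ} (hi : i < n) (hj : j < n)
    (hij : i ≠ j) : Disjoint (f^[i] ⁻¹' E) (f^[j] ⁻¹' E) := by
  wlog hlt : i < j generalizing i j
  · exact (this hj hi hij.symm (by omega)).symm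
  rw [show j = (j - i) + i by omega, iterate_add, preimage_comp]
  exact (h (j - i) (by omega) (by omega)).preimage _

theorem natCast_mul_measure_le [MeasurableSpace X] {μ : Measure X} (h : IsTowerBase f n E)
    (hf : MeasurePreserving f μ μ) (hE : NullMeasurableSet E μ) : n * μ E ≤ μ univ := by
  calc (n : ℝ≥0∞) * μ E = ∑ i ∈ Finset.range n, μ (f^[i] ⁻¹' E) := by
        simp [(hf.iterate _).measure_preimage hE]
    _ ≤ μ univ := sum_measure_le_measure_univ
        (fun i _ ↦ hE.preimage (hf.iterate i).quasiMeasurePreserving)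
        (fun i hi j hj hij ↦ (h.disjoint_preimage_iterate (by simpa using hi)
          (by simpa using hj) hij).aedisjoint)

theorem iUnion {ι : Type*} {E : ι → Set X} (hE : Directed (· ⊆ ·) E)
    (h : ∀ i, IsTowerBase f n (E i)) : IsTowerBase f n (⋃ i, E i) := by
  intro k hk hkn
  simp only [disjoint_left, preimage_iUnion, mem_iUnion, not_exists]
  rintro x ⟨i, hi⟩ j hj
  obtain ⟨l, hil, hjl⟩ := hE i j
  exact disjoint_left.1 (h l k hk hkn) (hil hi) (hjl hj)

end IsTowerBase

section Window

variable [MeasurableSpace X]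

def window (T : X ≃ᵐ X) (n : ℕ) (E : Set X) : Set X :=
  (⋃ k < n, T^[k] ⁻¹' E) ∪ ⋃ k < n, T.symm^[k] ⁻¹' E

variable {T : X ≃ᵐ X} {n : ℕ} {E G : Set X}

theorem subset_window (hn : 0 < n) : E ⊆ window T n E :=
  fun _ hx ↦ Or.inl (mem_iUnion₂.2 ⟨0, hn, hx⟩)

theorem window_mono : Monotone (window T n) := fun _ _ h ↦
  union_subset_union (biUnion_mono subset_rfl fun _ _ ↦ preimage_mono h)
    (biUnion_mono subset_rfl fun _ _ ↦ preimage_mono h)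

theorem measurableSet_window (hE : MeasurableSet E) : MeasurableSet (window T n E) :=
  (MeasurableSet.biUnion (to_countable _) fun k _ ↦ T.measurable.iterate k hE).union
    (MeasurableSet.biUnion (to_countable _) fun k _ ↦ T.symm.measurable.iterate k hE)

theorem IsTowerBase.union_diff_window (hE : IsTowerBase T n E) (hG : IsTowerBase T n G) :
    IsTowerBase T n (E ∪ (G \ window T n E)) := by
  intro k hk hkn
  rw [disjoint_left]
  rintro x (hxE | ⟨hxG, hxW⟩) (hyE | ⟨hyG, hyW⟩)
  · exact disjoint_left.1 (hE k hk hkn) hxE hyE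
  · refine hyW (Or.inr (mem_iUnion₂.2 ⟨k, hkn, ?_⟩))
    rwa [mem_preimage, LeftInverse.iterate T.symm_apply_apply k x]
  · exact hxW (Or.inl (mem_iUnion₂.2 ⟨k, hkn, hyE⟩))
  · exact disjoint_left.1 (hG k hk hkn) hxG hyG

def greedyTowerBase (T : X ≃ᵐ X) (n : ℕ) (G : ℕ → Set X) : ℕ → Set X
  | 0 => ∅
  | m + 1 => greedyTowerBase T n G m ∪ (G m \ window T n (greedyTowerBase T n G m))

theorem exists_isTowerBase_iUnion_subset_window (hn : 0 < n) {G : ℕ → Set X}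
    (hGm : ∀ m, MeasurableSet (G m)) (hG : ∀ m, IsTowerBase T n (G m)) :
    ∃ E, MeasurableSet E ∧ IsTowerBase T n E ∧ ⋃ m, G m ⊆ window T n E := by
  set E := greedyTowerBase T n G
  have hmono : Monotone E := monotone_nat_of_le_succ fun _ ↦ subset_union_left
  have hE : ∀ m, MeasurableSet (E m) ∧ IsTowerBase T n (E m) := by
    intro m
    induction m with
    | zero => exact ⟨.empty, fun _ _ _ ↦ empty_disjoint _⟩
    | succ m ih =>
      exact ⟨ih.1.union ((hGm m).diff (measurableSet_window ih.1)), ih.2.union_diff_window (hG m)⟩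
  refine ⟨⋃ m, E m, .iUnion fun m ↦ (hE m).1, .iUnion hmono.directed_le fun m ↦ (hE m).2,
    iUnion_subset fun m x hx ↦ window_mono (subset_iUnion E (m + 1)) ?_⟩
  by_cases hw : x ∈ window T n (E m)
  · exact window_mono (hmono m.le_succ) hw
  · exact subset_window hn (Or.inr ⟨hx, hw⟩)

theorem ae_exists_iterate_mem_of_ae_mem_window {μ : Measure X} (hT : MeasurePreserving T μ μ)
    (h : ∀ᵐ x ∂μ, x ∈ window T n E) : ∀ᵐ x ∂μ, ∃ t, T^[t] x ∈ E := by
  filter_upwards [(hT.iterate (n - 1)).quasiMeasurePreserving.ae h] with x hx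
  rcases hx with hx | hx <;> obtain ⟨k, hk, hx⟩ := mem_iUnion₂.1 hx
  · exact ⟨k + (n - 1), by rwa [iterate_add_apply]⟩
  · refine ⟨n - 1 - k, ?_⟩
    rwa [mem_preimage, show n - 1 = k + (n - 1 - k) by omega, iterate_add_apply,
      LeftInverse.iterate T.symm_apply_apply k] at hx

end Window

section FirstEntry

variable {f : X → X} {E : Set X}

def firstEntry (f : X → X) (E : Set X) (t : ℕ) : Set X :=
  f^[t] ⁻¹' E \ ⋃ j < t, f^[j] ⁻¹' E

theorem eq_of_mem_firstEntry {x : X} {t s : ℕ} (ht : x ∈ firstEntry f E t)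
    (hs : x ∈ firstEntry f E s) : t = s := by
  by_contra hne
  rcases Nat.lt_or_gt_of_ne hne with h | h
  · exact hs.2 (mem_iUnion₂.2 ⟨t, h, ht.1⟩)
  · exact ht.2 (mem_iUnion₂.2 ⟨s, h, hs.1⟩)

theorem iterate_mem_firstEntry {x : X} {t k : ℕ} (hx : x ∈ firstEntry f E (t + k)) :
    f^[k] x ∈ firstEntry f E t := by
  refine ⟨by rw [mem_preimage, ← iterate_add_apply]; exact hx.1, ?_⟩
  simp only [mem_iUnion₂, mem_preimage, not_exists]
  intro j hj hjE
  exact hx.2 (mem_iUnion₂.2 ⟨j + k, by omega, by rwa [mem_preimage, iterate_add_apply]⟩)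

theorem exists_mem_firstEntry {x : X} (hx : ∃ t, f^[t] x ∈ E) : ∃ t, x ∈ firstEntry f E t := by
  classical
  refine ⟨Nat.find hx, Nat.find_spec hx, ?_⟩
  simp only [mem_iUnion₂, mem_preimage, not_exists]
  exact fun j hj ↦ Nat.find_min hx hj

theorem measurableSet_firstEntry [MeasurableSpace X] (hf : Measurable f) (hE : MeasurableSet E)
    (t : ℕ) : MeasurableSet (firstEntry f E t) :=
  (hf.iterate t hE).diff (.biUnion (to_countable _) fun j _ ↦ hf.iterate j hE)

def rokhlinBase (f : X → X) (E : Set X) (N : ℕ) : Set X :=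
  ⋃ q, firstEntry f E (q * (N + 1) + N)

theorem isTowerBase_rokhlinBase (N : ℕ) : IsTowerBase f (N + 1) (rokhlinBase f E N) := by
  intro k hk hkN
  rw [disjoint_left]
  rintro x hx hkx
  obtain ⟨a, ha⟩ := mem_iUnion.1 hx
  obtain ⟨b, hb⟩ := mem_iUnion.1 hkx
  have ha' : f^[k] x ∈ firstEntry f E (a * (N + 1) + (N - k)) :=
    iterate_mem_firstEntry (by rwa [show a * (N + 1) + (N - k) + k = a * (N + 1) + N by omega])
  have hmod : (a * (N + 1) + (N - k)) % (N + 1) = (b * (N + 1) + N) % (N + 1) := by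
    rw [eq_of_mem_firstEntry ha' hb]
  rw [Nat.mul_add_mod_of_lt (by omega), Nat.mul_add_mod_of_lt (by omega)] at hmod
  omega

theorem compl_iUnion_preimage_rokhlinBase_subset (N : ℕ) :
    (⋃ i < N + 1, f^[i] ⁻¹' rokhlinBase f E N)ᶜ ⊆
      {x | ¬∃ t, f^[t] x ∈ E} ∪ ⋃ t < N, f^[t] ⁻¹' E := by
  rw [compl_subset_comm, compl_union]
  rintro x ⟨hhit, hnear⟩
  obtain ⟨t, ht⟩ := exists_mem_firstEntry (not_not.1 hhit)
  have hNt : N ≤ t := by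
    by_contra hlt
    exact hnear (mem_iUnion₂.2 ⟨t, by omega, ht.1⟩)
  refine mem_iUnion₂.2 ⟨(t - N) % (N + 1), Nat.mod_lt _ N.succ_pos,
    mem_iUnion.2 ⟨(t - N) / (N + 1), iterate_mem_firstEntry ?_⟩⟩
  have := Nat.div_add_mod' (t - N) (N + 1)
  rwa [show (t - N) / (N + 1) * (N + 1) + N + (t - N) % (N + 1) = t by omega]

theorem measure_compl_iUnion_preimage_rokhlinBase_le [MeasurableSpace X] {μ : Measure X}
    (hf : MeasurePreserving f μ μ) (hE : NullMeasurableSet E μ)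
    (hsweep : ∀ᵐ x ∂μ, ∃ t, f^[t] x ∈ E) (N : ℕ) :
    μ (⋃ i < N + 1, f^[i] ⁻¹' rokhlinBase f E N)ᶜ ≤ N * μ E := by
  calc μ (⋃ i < N + 1, f^[i] ⁻¹' rokhlinBase f E N)ᶜ
      ≤ μ {x | ¬∃ t, f^[t] x ∈ E} + μ (⋃ t ∈ Finset.range N, f^[t] ⁻¹' E) := by
        simpa only [Finset.mem_range] using
          (measure_mono (compl_iUnion_preimage_rokhlinBase_subset N)).trans (measure_union_le _ _)
    _ ≤ 0 + ∑ t ∈ Finset.range N, μ (f^[t] ⁻¹' E) :=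
        add_le_add (ae_iff.1 hsweep).le (measure_biUnion_finset_le _ _)
    _ = N * μ E := by simp [(hf.iterate _).measure_preimage hE]

end FirstEntry

theorem exists_seq_isTowerBase_cover [MeasurableSpace X] [MeasurableSpace.CountablySeparated X]
    {f : X → X} (hf : Measurable f) (n : ℕ) :
    ∃ G : ℕ → Set X, (∀ m, MeasurableSet (G m)) ∧ (∀ m, IsTowerBase f n (G m)) ∧
      {x | ∀ k, 0 < k → k < n → f^[k] x ≠ x} ⊆ ⋃ m, G m := by
  obtain ⟨D, hDm, hD⟩ := exists_seq_separating X MeasurableSet.empty univ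
  let A : ℕ × Bool → Set X := fun i ↦ bif i.2 then D i.1 else (D i.1)ᶜ
  have hAm : ∀ i, MeasurableSet (A i) := fun ⟨i, b⟩ ↦ by cases b <;> simp [A, hDm i]
  have hA : ∀ x y, x ≠ y → ∃ i, x ∈ A i ∧ y ∉ A i := by
    intro x y hxy
    obtain ⟨i, hi⟩ : ∃ i, ¬(x ∈ D i ↔ y ∈ D i) := by
      by_contra! h
      exact hxy (hD x trivial y trivial h)
    by_cases hx : x ∈ D i
    · exact ⟨(i, true), by simp_all [A]⟩
    · exact ⟨(i, false), by simp_all [A]⟩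
  -- `A (c k) \ f^[k] ⁻¹' A (c k)` is disjoint from its `f^[k]`-preimage.
  let H : (Fin n → ℕ × Bool) → Set X :=
    fun c ↦ ⋂ k : Fin n, ⋂ (_ : 0 < (k : ℕ)), A (c k) \ f^[k] ⁻¹' A (c k)
  obtain ⟨g, hg⟩ := exists_surjective_nat (Fin n → ℕ × Bool)
  refine ⟨H ∘ g, fun m ↦ ?_, fun m k hk hkn ↦ ?_, fun x hx ↦ ?_⟩
  · exact .iInter fun k ↦ .iInter fun _ ↦ (hAm _).diff (hf.iterate k (hAm _))
  · have hsub : H (g m) ⊆ A (g m ⟨k, hkn⟩) \ f^[k] ⁻¹' A (g m ⟨k, hkn⟩) :=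
      iInter₂_subset (⟨k, hkn⟩ : Fin n) hk
    exact disjoint_left.2 fun y hy hfy ↦ (hsub hy).2 (hsub hfy).1
  · have : ∀ k : Fin n, ∃ i, 0 < (k : ℕ) → x ∈ A i ∧ f^[k] x ∉ A i := fun k ↦
      if h : 0 < (k : ℕ) then (hA x _ (hx k h k.2).symm).imp fun _ hi _ ↦ hi
      else ⟨default, fun h' ↦ absurd h' h⟩
    choose c hc using this
    obtain ⟨m, rfl⟩ := hg c
    exact mem_iUnion.2 ⟨m, mem_iInter₂.2 fun k hk ↦ hc k hk⟩

theorem exists_isTowerBase_natCast_mul_measure_compl_le [MeasurableSpace X]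
    [MeasurableSpace.CountablySeparated X] {μ : Measure X} (T : X ≃ᵐ X)
    (hT : MeasurePreserving T μ μ) {n : ℕ} (hn : 0 < n)
    (hap : ∀ k, 0 < k → k < n → μ {x | T^[k] x = x} = 0) (N : ℕ) :
    ∃ B, MeasurableSet B ∧ IsTowerBase T (N + 1) B ∧
      n * μ (⋃ i < N + 1, T^[i] ⁻¹' B)ᶜ ≤ N * μ univ := by
  obtain ⟨G, hGm, hG, hcover⟩ := exists_seq_isTowerBase_cover T.measurable n
  obtain ⟨E, hEm, hE, hGE⟩ := exists_isTowerBase_iUnion_subset_window hn hGm hG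
  have haper : ∀ᵐ x ∂μ, ∀ k, 0 < k → k < n → T^[k] x ≠ x := by
    refine ae_all_iff.2 fun k ↦ ?_
    by_cases hk : 0 < k ∧ k < n
    · filter_upwards [measure_eq_zero_iff_ae_notMem.1 (hap k hk.1 hk.2)] with x hx _ _ using hx
    · exact .of_forall fun x h1 h2 ↦ absurd ⟨h1, h2⟩ hk
  have hsweep := ae_exists_iterate_mem_of_ae_mem_window hT (haper.mono fun x hx ↦ hGE (hcover hx))
  refine ⟨rokhlinBase T E N, .iUnion fun _ ↦ measurableSet_firstEntry T.measurable hEm _,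
    isTowerBase_rokhlinBase N, ?_⟩
  calc (n : ℝ≥0∞) * μ (⋃ i < N + 1, T^[i] ⁻¹' rokhlinBase T E N)ᶜ ≤ n * (N * μ E) := by
        gcongr
        exact measure_compl_iUnion_preimage_rokhlinBase_le hT hEm.nullMeasurableSet hsweep N
    _ = N * (n * μ E) := by ring
    _ ≤ N * μ univ := by
        gcongr
        exact hE.natCast_mul_measure_le hT hEm.nullMeasurableSet

namespace MeasurableEquiv

variable [MeasurableSpace X] (e : X ≃ᵐ X) (k : ℕ)

theorem image_iterate_eq_preimage_iterate_symm (s : Set X) : e^[k] '' s = e.symm^[k] ⁻¹' s := by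
  rw [image_eq_preimage_of_inverse (LeftInverse.iterate e.symm_apply_apply k) (LeftInverse.iterate e.apply_symm_apply k)]

theorem iterate_symm_apply_eq_self_iff (x : X) : e.symm^[k] x = x ↔ e^[k] x = x := by
  constructor <;> intro h
  · calc e^[k] x = e^[k] (e.symm^[k] x) := by rw [h]
      _ = x := LeftInverse.iterate e.apply_symm_apply k x
  · calc e.symm^[k] x = e.symm^[k] (e^[k] x) := by rw [h]
      _ = x := LeftInverse.iterate e.symm_apply_apply k x

end MeasurableEquiv

theorem one_sub_lt_measure_of_measure_compl_lt [MeasurableSpace X] {μ : Measure X}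
    [IsProbabilityMeasure μ] {A : Set X} (hA : MeasurableSet A) {δ : ℝ≥0∞} (hδ : δ ≤ 1)
    (h : μ Aᶜ < δ) : 1 - δ < μ A :=
  ENNReal.sub_lt_of_sub_lt hδ (.inl ENNReal.one_ne_top) (by rwa [← prob_compl_eq_one_sub hA])

theorem ENNReal.lt_ofReal_of_natCast_mul_le {c : ℝ≥0∞} {n N : ℕ} {δ : ℝ} (hδ : 0 < δ)
    (hn : N / δ < n) (h : n * c ≤ N) : c < ENNReal.ofReal δ := by
  have hn0 : (0 : ℝ) < n := (div_nonneg N.cast_nonneg hδ.le).trans_lt hn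
  have hc : c ≠ ⊤ := by
    rintro rfl
    simp [ENNReal.mul_top (by exact_mod_cast hn0.ne' : (n : ℝ≥0∞) ≠ 0)] at h
  rw [ENNReal.lt_ofReal_iff_toReal_lt hc]
  have : n * c.toReal ≤ N := by
    simpa using ENNReal.toReal_mono (ENNReal.natCast_ne_top N) h
  rw [div_lt_iff₀ hδ] at hn
  nlinarith

end Tower

/-- Rokhlin–Halmos lemma: for an aperiodic automorphism `S`, `ε > 0` and `N ≥ 1`
there is a measurable `B` with `B, SB, …, S^{N-1}B` pairwise disjoint and
`μ(B ∪ SB ∪ ⋯ ∪ S^{N-1}B) > 1 - ε`. -/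
theorem rokhlin_halmos {X : Type*} [MeasurableSpace X] [StandardBorelSpace X]
    (μ : Measure X) [IsProbabilityMeasure μ] (S : Aut X μ)
    (hS : Aperiodic S) (ε : ℝ) (hε : 0 < ε) (N : ℕ) (hN : 1 ≤ N) :
    ∃ B : Set X, MeasurableSet B ∧
      (∀ i j, i < N → j < N → i ≠ j →
        Disjoint (S.toEquiv^[i] '' B) (S.toEquiv^[j] '' B)) ∧
      1 - ENNReal.ofReal ε < μ (⋃ i < N, S.toEquiv^[i] '' B) := by
  obtain ⟨M, rfl⟩ : ∃ M, N = M + 1 := ⟨N - 1, by omega⟩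
  have hδ : 0 < min ε 1 := lt_min hε one_pos
  obtain ⟨n, hn⟩ := exists_nat_gt ((M : ℝ) / min ε 1)
  have hn0 : 0 < n := by exact_mod_cast (div_nonneg M.cast_nonneg hδ.le).trans_lt hn
  obtain ⟨B, hBm, hB, hcompl⟩ := exists_isTowerBase_natCast_mul_measure_compl_le S.toEquiv.symm
    (S.mp.symm _) hn0 (fun k hk _ ↦ by
      simpa only [MeasurableEquiv.iterate_symm_apply_eq_self_iff] using hS k hk) M
  simp only [MeasurableEquiv.image_iterate_eq_preimage_iterate_symm]
  refine ⟨B, hBm, fun i j hi hj hij ↦ hB.disjoint_preimage_iterate hi hj hij, ?_⟩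
  refine (tsub_le_tsub_left (ENNReal.ofReal_le_ofReal (min_le_left ε 1)) 1).trans_lt
    (one_sub_lt_measure_of_measure_compl_lt
      (.biUnion (to_countable _) fun i _ ↦ S.toEquiv.symm.measurable.iterate i hBm)
      (ENNReal.ofReal_le_one.2 (min_le_right ε 1)) ?_)
  rw [measure_univ, mul_one] at hcompl
  exact ENNReal.lt_ofReal_of_natCast_mul_le hδ hn hcompl
end

section
/- For fixed natural numbers m ≥ 1 and n ≥ 1, the set U_{m,n} = { R ∈ Ext(S) : μ({x : ρ(C(x,n,R), Id) < 1/m}) > 0 } is open in Ext(S) with respect to the Halmos metric, where C(x,n,R) = T_{S^{n-1}x} ∘ ... ∘ T_{Sx} ∘ T_x is the n-th cocycle of the skew product R = (S, T_x). -/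
/-!
Fix `E` in the set. For `F` close to `E`, the fibrewise distances `ρ(C(x,n,E), C(x,n,F))` are small
on average: by Fubini their integral is a Halmos distance between `R_E^n` and `R_F^n`, measured on
the cylinders `X × A i`, and `R ↦ R^n` is continuous since the Halmos metric built on a dense family
controls `μ(R C ∆ R' C)` for every measurable `C`. Choose `α > 0` with
`ρ(C(x,n,E), Id) + α < 1/m` on a set `B` of positive measure. By Markov's inequality, for `F` close
to `E` the fibrewise distance stays below `α` on a part of `B` of positive measure, and there the
triangle inequality gives `ρ(C(x,n,F), Id) < 1/m`.
-/

open MeasureTheory Set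

open Filter Topology
open scoped ENNReal symmDiff

namespace Aut

variable {Y : Type*} [MeasurableSpace Y] {ν : Measure Y}

def pow (P : Aut Y ν) : ℕ → Aut Y ν
  | 0 => Aut.id ν
  | n + 1 => P.comp (P.pow n)

lemma measure_image (P : Aut Y ν) (s : Set Y) : ν (P.toEquiv '' s) = ν s := by
  rw [← MeasurableEquiv.preimage_symm]
  exact (P.mp.symm P.toEquiv).measure_preimage_equiv s

lemma measure_image_symmDiff (P : Aut Y ν) (s t : Set Y) :
    ν ((P.toEquiv '' s) ∆ (P.toEquiv '' t)) = ν (s ∆ t) := by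
  rw [← image_symmDiff P.toEquiv.injective, measure_image]

lemma image_comp (a b : Aut Y ν) (s : Set Y) :
    (a.comp b).toEquiv '' s = a.toEquiv '' (b.toEquiv '' s) :=
  Set.image_comp a.toEquiv b.toEquiv s

lemma comp_inv (a b : Aut Y ν) : (a.comp b).inv = b.inv.comp a.inv := rfl

def TendstoImage {ι : Type*} (f : ι → Aut Y ν) (l : Filter ι) (P : Aut Y ν) : Prop :=
  ∀ C, MeasurableSet C → Tendsto (fun q => ν ((P.toEquiv '' C) ∆ ((f q).toEquiv '' C))) l (𝓝 0)

/-- Convergence in Halmos's weak topology on `Aut Y ν`, required of the inverses as well. -/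
def TendstoWeakly {ι : Type*} (f : ι → Aut Y ν) (l : Filter ι) (P : Aut Y ν) : Prop :=
  TendstoImage f l P ∧ TendstoImage (fun q => (f q).inv) l P.inv

variable {ι : Type*} {l : Filter ι} {f g : ι → Aut Y ν} {P P' : Aut Y ν}

lemma TendstoImage.comp (hf : TendstoImage f l P) (hg : TendstoImage g l P') :
    TendstoImage (fun q => (f q).comp (g q)) l (P.comp P') := fun C hC => by
  have hC' : MeasurableSet (P'.toEquiv '' C) := (MeasurableEquiv.measurableSet_image _).2 hC
  refine tendsto_of_tendsto_of_tendsto_of_le_of_le tendsto_const_nhds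
    (by simpa using (hf _ hC').add (hg C hC)) (fun _ => zero_le) fun q => ?_
  rw [image_comp, image_comp]
  calc ν ((P.toEquiv '' (P'.toEquiv '' C)) ∆ ((f q).toEquiv '' ((g q).toEquiv '' C)))
      ≤ ν ((P.toEquiv '' (P'.toEquiv '' C)) ∆ ((f q).toEquiv '' (P'.toEquiv '' C))) +
          ν (((f q).toEquiv '' (P'.toEquiv '' C)) ∆ ((f q).toEquiv '' ((g q).toEquiv '' C))) :=
        measure_symmDiff_le _ _ _
    _ = _ := by rw [measure_image_symmDiff]

lemma tendstoWeakly_const : TendstoWeakly (fun _ => P) l P :=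
  ⟨fun C _ => by simpa using tendsto_const_nhds, fun C _ => by simpa using tendsto_const_nhds⟩

lemma TendstoWeakly.comp (hf : TendstoWeakly f l P) (hg : TendstoWeakly g l P') :
    TendstoWeakly (fun q => (f q).comp (g q)) l (P.comp P') :=
  ⟨hf.1.comp hg.1, fun C hC => by simpa only [comp_inv] using hg.2.comp hf.2 C hC⟩

lemma TendstoWeakly.pow (hf : TendstoWeakly f l P) (n : ℕ) :
    TendstoWeakly (fun q => (f q).pow n) l (P.pow n) := by
  induction n with
  | zero => exact tendstoWeakly_const
  | succ n ih => exact hf.comp ih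

end Aut

section Halmos

variable {Y : Type*} [MeasurableSpace Y] {ν : Measure Y} (A : ℕ → Set Y)

def halmosTerm (P Q : Aut Y ν) (i : ℕ) : ℝ≥0∞ :=
  ν ((P.toEquiv '' A i) ∆ (Q.toEquiv '' A i)) +
    ν ((P.toEquiv.symm '' A i) ∆ (Q.toEquiv.symm '' A i))

/-- Working in `ℝ≥0∞` avoids the summability side conditions of `halmos`. -/
noncomputable def ehalmos (P Q : Aut Y ν) : ℝ≥0∞ := ∑' i, 2⁻¹ ^ i * halmosTerm A P Q i

noncomputable def halmosNhds (P : Aut Y ν) : Filter (Aut Y ν) := comap (ehalmos A P) (𝓝 0)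

instance (P : Aut Y ν) : (halmosNhds A P).IsCountablyGenerated :=
  comap.isCountablyGenerated _ _

lemma ehalmos_comm (P Q : Aut Y ν) : ehalmos A P Q = ehalmos A Q P := by
  simp only [ehalmos, halmosTerm, symmDiff_comm]

lemma ehalmos_inv (P Q : Aut Y ν) : ehalmos A P.inv Q.inv = ehalmos A P Q := by
  simp only [ehalmos, halmosTerm, Aut.inv, MeasurableEquiv.symm_symm, add_comm]

lemma ehalmos_le_add (P Q R : Aut Y ν) : ehalmos A P R ≤ ehalmos A P Q + ehalmos A Q R := by
  rw [ehalmos, ehalmos, ehalmos, ← ENNReal.tsum_add]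
  refine ENNReal.tsum_le_tsum fun i => ?_
  rw [← mul_add]
  gcongr
  exact (add_le_add (measure_symmDiff_le _ (Q.toEquiv '' A i) _)
    (measure_symmDiff_le _ (Q.toEquiv.symm '' A i) _)).trans_eq (add_add_add_comm _ _ _ _)

lemma halmosTerm_le_two_pow_mul_ehalmos (P Q : Aut Y ν) (i : ℕ) :
    halmosTerm A P Q i ≤ 2 ^ i * ehalmos A P Q :=
  calc halmosTerm A P Q i = 2 ^ i * (2⁻¹ ^ i * halmosTerm A P Q i) := by
        rw [← mul_assoc, ← mul_pow, ENNReal.mul_inv_cancel two_ne_zero ENNReal.ofNat_ne_top,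
          one_pow, one_mul]
    _ ≤ 2 ^ i * ehalmos A P Q := by gcongr; exact ENNReal.le_tsum i

lemma halmosTerm_le_two_mul_measure_univ (P Q : Aut Y ν) (i : ℕ) :
    halmosTerm A P Q i ≤ 2 * ν univ := by
  rw [two_mul]
  exact add_le_add (measure_mono (subset_univ _)) (measure_mono (subset_univ _))

lemma ENNReal.tsum_two_inv_pow_mul (c : ℝ≥0∞) : ∑' i : ℕ, 2⁻¹ ^ i * c = 2 * c := by
  rw [ENNReal.tsum_mul_right, ENNReal.tsum_geometric, ENNReal.one_sub_inv_two, inv_inv]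

lemma ehalmos_ne_top [IsFiniteMeasure ν] (P Q : Aut Y ν) : ehalmos A P Q ≠ ⊤ := by
  refine ne_top_of_le_ne_top ?_ (ENNReal.tsum_le_tsum fun i =>
    mul_le_mul_of_nonneg_left (halmosTerm_le_two_mul_measure_univ A P Q i) zero_le)
  rw [ENNReal.tsum_two_inv_pow_mul]
  finiteness

lemma halmos_eq_toReal_ehalmos [IsFiniteMeasure ν] (P Q : Aut Y ν) :
    halmos A P Q = (ehalmos A P Q).toReal := by
  rw [ehalmos, ENNReal.tsum_toReal_eq fun i => ne_top_of_le_ne_top (ehalmos_ne_top A P Q)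
    (ENNReal.le_tsum (f := fun i => 2⁻¹ ^ i * halmosTerm A P Q i) i)]
  simp [halmos, halmosTerm, ENNReal.toReal_add, measure_ne_top]

lemma ofReal_halmos [IsFiniteMeasure ν] (P Q : Aut Y ν) :
    ENNReal.ofReal (halmos A P Q) = ehalmos A P Q := by
  rw [halmos_eq_toReal_ehalmos, ENNReal.ofReal_toReal (ehalmos_ne_top A P Q)]

lemma halmos_lt_iff_ehalmos_lt [IsFiniteMeasure ν] (P Q : Aut Y ν) (r : ℝ) :
    halmos A P Q < r ↔ ehalmos A P Q < ENNReal.ofReal r := by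
  rw [halmos_eq_toReal_ehalmos, ENNReal.lt_ofReal_iff_toReal_lt (ehalmos_ne_top A P Q)]

end Halmos

section HalmosTopology

variable {Y : Type*} [MeasurableSpace Y] {ν : Measure Y} {A : ℕ → Set Y}
  {ι : Type*} {l : Filter ι} {g : ι → Aut Y ν} {P : Aut Y ν}

lemma Aut.TendstoImage.of_tendsto_halmosNhds
    (hA : ∀ C : Set Y, MeasurableSet C → ∀ ε > (0 : ℝ), ∃ i, ν (C ∆ A i) < ENNReal.ofReal ε)
    (hg : Tendsto g l (halmosNhds A P)) : Aut.TendstoImage g l P := fun C hC => by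
  have hdist : Tendsto (fun q => ehalmos A P (g q)) l (𝓝 0) := tendsto_comap_iff.1 hg
  refine ENNReal.tendsto_nhds_zero.2 fun ε hε => ?_
  have hε3 : 0 < ε / 3 := ENNReal.div_pos hε.ne' ENNReal.ofNat_ne_top
  obtain ⟨r, -, hr0, hrε⟩ := ENNReal.lt_iff_exists_real_btwn.1 hε3
  obtain ⟨j, hj⟩ := hA C hC r (ENNReal.ofReal_pos.1 hr0)
  have hCA : ν (C ∆ A j) ≤ ε / 3 := (hj.trans hrε).le
  have hnear : ∀ᶠ q in l, (2 : ℝ≥0∞) ^ j * ehalmos A P (g q) < ε / 3 := by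
    have := ENNReal.Tendsto.const_mul hdist (Or.inr (by simp : (2 : ℝ≥0∞) ^ j ≠ ⊤))
    rw [mul_zero] at this
    exact this.eventually (gt_mem_nhds hε3)
  filter_upwards [hnear] with q hq
  have hAj : ν ((P.toEquiv '' A j) ∆ ((g q).toEquiv '' A j)) ≤ ε / 3 :=
    (le_self_add.trans (halmosTerm_le_two_pow_mul_ehalmos A P (g q) j)).trans hq.le
  calc ν ((P.toEquiv '' C) ∆ ((g q).toEquiv '' C))
      ≤ ν ((P.toEquiv '' C) ∆ (P.toEquiv '' A j)) +
          ν ((P.toEquiv '' A j) ∆ ((g q).toEquiv '' A j)) +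
          ν (((g q).toEquiv '' A j) ∆ ((g q).toEquiv '' C)) :=
        (measure_symmDiff_le _ ((g q).toEquiv '' A j) _).trans
          (by gcongr; exact measure_symmDiff_le _ _ _)
    _ ≤ ε / 3 + ε / 3 + ε / 3 := by
        rw [Aut.measure_image_symmDiff, Aut.measure_image_symmDiff, symmDiff_comm (A j)]
        gcongr
    _ = ε := ENNReal.add_thirds ε

lemma Aut.TendstoWeakly.of_tendsto_halmosNhds
    (hA : ∀ C : Set Y, MeasurableSet C → ∀ ε > (0 : ℝ), ∃ i, ν (C ∆ A i) < ENNReal.ofReal ε)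
    (hg : Tendsto g l (halmosNhds A P)) : Aut.TendstoWeakly g l P := by
  refine ⟨.of_tendsto_halmosNhds hA hg, .of_tendsto_halmosNhds hA (tendsto_comap_iff.2 ?_)⟩
  simpa only [Function.comp_def, ehalmos_inv] using tendsto_comap_iff.1 hg

lemma Aut.TendstoWeakly.tendsto_ehalmos [IsFiniteMeasure ν] [l.IsCountablyGenerated]
    (hA : ∀ i, MeasurableSet (A i)) (hg : Aut.TendstoWeakly g l P) :
    Tendsto (fun q => ehalmos A P (g q)) l (𝓝 0) := by
  have hterm (i : ℕ) : Tendsto (fun q => 2⁻¹ ^ i * halmosTerm A P (g q) i) l (𝓝 0) := by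
    simpa [halmosTerm, Aut.inv] using
      ENNReal.Tendsto.const_mul ((hg.1 _ (hA i)).add (hg.2 _ (hA i))) (Or.inr (by simp))
  -- dominated convergence for the counting measure on `ℕ`
  have := tendsto_lintegral_filter_of_dominated_convergence (μ := Measure.count)
    (fun i => 2⁻¹ ^ i * (2 * ν univ)) (.of_forall fun q => .of_discrete)
    (.of_forall fun q => .of_forall fun i => by
      gcongr; exact halmosTerm_le_two_mul_measure_univ A P (g q) i)
    (by simp [lintegral_count, ENNReal.tsum_two_inv_pow_mul, ENNReal.mul_ne_top, measure_ne_top])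
    (.of_forall hterm)
  simpa [lintegral_count, ehalmos] using this

end HalmosTopology

namespace SkewExt

variable {X : Type*} [MeasurableSpace X] {μ : Measure X} {S : Aut X μ}

lemma pow_apply (E : SkewExt S) (n : ℕ) (p : X × X) :
    (E.prod.pow n).toEquiv p = (S.toEquiv^[n] p.1, (cocycle S E.T p.1 n).toEquiv p.2) := by
  induction n with
  | zero => rfl
  | succ n ih =>
    change E.prod.toEquiv ((E.prod.pow n).toEquiv p) = _
    rw [ih, E.spec, Function.iterate_succ_apply']
    rfl

lemma preimage_image_pow_univ_prod (E : SkewExt S) (n : ℕ) (B : Set X) (x : X) :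
    Prod.mk (S.toEquiv^[n] x) ⁻¹' ((E.prod.pow n).toEquiv '' (univ ×ˢ B)) =
      (cocycle S E.T x n).toEquiv '' B := by
  ext y
  constructor
  · rintro ⟨⟨x', b⟩, ⟨-, hb⟩, h⟩
    rw [pow_apply, Prod.mk.injEq] at h
    obtain rfl := (S.toEquiv.injective.iterate n) h.1
    exact ⟨b, hb, h.2⟩
  · rintro ⟨b, hb, rfl⟩
    exact ⟨(x, b), ⟨trivial, hb⟩, pow_apply E n (x, b)⟩

lemma preimage_symm_image_pow_univ_prod (E : SkewExt S) (n : ℕ) (B : Set X) (x : X) :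
    Prod.mk x ⁻¹' ((E.prod.pow n).toEquiv.symm '' (univ ×ˢ B)) =
      (cocycle S E.T x n).toEquiv.symm '' B := by
  ext y
  simp [MeasurableEquiv.image_symm, pow_apply]

variable {A : ℕ → Set X}

lemma halmosTerm_cocycle (E F : SkewExt S) (n : ℕ) (x : X) (i : ℕ) :
    halmosTerm A (cocycle S E.T x n) (cocycle S F.T x n) i =
      μ (Prod.mk (S.toEquiv^[n] x) ⁻¹'
          (((E.prod.pow n).toEquiv '' (univ ×ˢ A i)) ∆ ((F.prod.pow n).toEquiv '' (univ ×ˢ A i)))) +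
        μ (Prod.mk x ⁻¹' (((E.prod.pow n).toEquiv.symm '' (univ ×ˢ A i)) ∆
          ((F.prod.pow n).toEquiv.symm '' (univ ×ˢ A i)))) := by
  simp only [halmosTerm, preimage_symmDiff, preimage_image_pow_univ_prod,
    preimage_symm_image_pow_univ_prod]

variable [SFinite μ]

lemma measurable_halmosTerm_cocycle (hA : ∀ i, MeasurableSet (A i)) (E F : SkewExt S) (n i : ℕ) :
    Measurable fun x => halmosTerm A (cocycle S E.T x n) (cocycle S F.T x n) i := by
  simp only [halmosTerm_cocycle]
  have hm := fun e : X × X ≃ᵐ X × X => e.measurableSet_image.2 (MeasurableSet.univ.prod (hA i))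
  exact ((measurable_measure_prodMk_left ((hm _).symmDiff (hm _))).comp
    (S.toEquiv.measurable.iterate n)).add (measurable_measure_prodMk_left ((hm _).symmDiff (hm _)))

lemma lintegral_halmosTerm_cocycle (hA : ∀ i, MeasurableSet (A i)) (E F : SkewExt S) (n i : ℕ) :
    ∫⁻ x, halmosTerm A (cocycle S E.T x n) (cocycle S F.T x n) i ∂μ =
      halmosTerm (fun i => univ ×ˢ A i) (E.prod.pow n) (F.prod.pow n) i := by
  have hm := fun e : X × X ≃ᵐ X × X => e.measurableSet_image.2 (MeasurableSet.univ.prod (hA i))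
  have hV := (hm (E.prod.pow n).toEquiv).symmDiff (hm (F.prod.pow n).toEquiv)
  have hW := (hm (E.prod.pow n).toEquiv.symm).symmDiff (hm (F.prod.pow n).toEquiv.symm)
  have hV' : Measurable fun x => μ (Prod.mk (S.toEquiv^[n] x) ⁻¹' _) :=
    (measurable_measure_prodMk_left hV).comp (S.toEquiv.measurable.iterate n)
  simp only [halmosTerm_cocycle]
  rw [lintegral_add_left hV', (S.mp.iterate n).lintegral_comp (measurable_measure_prodMk_left hV),
    ← Measure.prod_apply hV, ← Measure.prod_apply hW]
  rfl

lemma lintegral_ehalmos_cocycle (hA : ∀ i, MeasurableSet (A i)) (E F : SkewExt S) (n : ℕ) :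
    ∫⁻ x, ehalmos A (cocycle S E.T x n) (cocycle S F.T x n) ∂μ =
      ehalmos (fun i => univ ×ˢ A i) (E.prod.pow n) (F.prod.pow n) := by
  simp only [ehalmos]
  rw [lintegral_tsum fun i => ((measurable_halmosTerm_cocycle hA E F n i).const_mul _).aemeasurable]
  simp only [lintegral_const_mul _ (measurable_halmosTerm_cocycle hA E F n _),
    lintegral_halmosTerm_cocycle hA]

lemma measurable_ehalmos_cocycle (hA : ∀ i, MeasurableSet (A i)) (E F : SkewExt S) (n : ℕ) :
    Measurable fun x => ehalmos A (cocycle S E.T x n) (cocycle S F.T x n) :=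
  .tsum fun i => (measurable_halmosTerm_cocycle hA E F n i).const_mul _

lemma tendsto_lintegral_ehalmos_cocycle [IsFiniteMeasure μ] (hA : ∀ i, MeasurableSet (A i))
    {A₂ : ℕ → Set (X × X)} (hA₂ : ∀ C : Set (X × X), MeasurableSet C → ∀ ε > (0 : ℝ),
      ∃ i, (μ.prod μ) (C ∆ A₂ i) < ENNReal.ofReal ε) (E : SkewExt S) (n : ℕ) :
    Tendsto (fun F : SkewExt S => ∫⁻ x, ehalmos A (cocycle S E.T x n) (cocycle S F.T x n) ∂μ)
      (comap SkewExt.prod (halmosNhds A₂ E.prod)) (𝓝 0) := by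
  simp only [lintegral_ehalmos_cocycle hA]
  exact ((Aut.TendstoWeakly.of_tendsto_halmosNhds hA₂ tendsto_comap).pow n).tendsto_ehalmos
    fun i => MeasurableSet.univ.prod (hA i)

end SkewExt

section Markov

variable {X : Type*} [MeasurableSpace X] {μ : Measure X} {f : X → ℝ≥0∞} {c : ℝ≥0∞}

lemma exists_measure_add_lt_pos (hf : 0 < μ {x | f x < c}) :
    ∃ α ≠ 0, 0 < μ {x | f x + α < c} := by
  have hcover : {x | f x < c} ⊆ ⋃ k : ℕ, {x | f x + (k : ℝ≥0∞)⁻¹ < c} := fun x hx => by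
    obtain ⟨k, hk⟩ := ENNReal.exists_inv_nat_lt (tsub_pos_of_lt hx).ne'
    exact mem_iUnion.2 ⟨k, by simpa [add_comm] using lt_tsub_iff_left.1 hk⟩
  by_contra! h
  exact hf.ne' (measure_mono_null hcover (measure_iUnion_null fun k =>
    nonpos_iff_eq_zero.1 (h _ (ENNReal.inv_ne_zero.2 (ENNReal.natCast_ne_top k)))))

/-- The sets `{f < c}` and `{h q < c}` need not be measurable: `μ` acts on them as an outer
measure. -/
lemma eventually_measure_lt_pos {ι : Type*} {l : Filter ι} {g h : ι → X → ℝ≥0∞}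
    (hg : ∀ q, Measurable (g q)) (hg0 : Tendsto (fun q => ∫⁻ x, g q x ∂μ) l (𝓝 0))
    (hle : ∀ q x, h q x ≤ f x + g q x) (hf : 0 < μ {x | f x < c}) :
    ∀ᶠ q in l, 0 < μ {x | h q x < c} := by
  obtain ⟨α, hα, hB⟩ := exists_measure_add_lt_pos hf
  set B := {x | f x + α < c}
  filter_upwards [hg0.eventually (gt_mem_nhds (ENNReal.mul_pos hα hB.ne'))] with q hq
  -- Markov's inequality
  have hsmall : μ {x | α ≤ g q x} < μ B :=
    lt_of_mul_lt_mul_left' ((mul_meas_ge_le_lintegral₀ (hg q).aemeasurable α).trans_lt hq)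
  refine (tsub_pos_of_lt hsmall).trans_le (le_measure_sdiff.trans (measure_mono ?_))
  rintro x ⟨hxB, hxg⟩
  calc h q x ≤ f x + g q x := hle q x
    _ ≤ f x + α := by gcongr; exact (not_le.1 hxg).le
    _ < c := hxB

end Markov

lemma isOpenWrt_of_forall_eventually {Z : Type*} {d : Z → Z → ℝ} {U : Set Z}
    (h : ∀ z ∈ U, ∀ᶠ w in comap (fun w => ENNReal.ofReal (d z w)) (𝓝 0), w ∈ U) :
    IsOpenWrt d U := fun z hz => by
  obtain ⟨ε, hε, hεU⟩ := (ENNReal.nhds_zero_basis.comap _).eventually_iff.1 (h z hz)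
  obtain ⟨r, -, hr0, hrε⟩ := ENNReal.lt_iff_exists_real_btwn.1 hε
  refine ⟨r, ENNReal.ofReal_pos.1 hr0, fun w hw => hεU ?_⟩
  exact (ENNReal.ofReal_lt_ofReal_iff (ENNReal.ofReal_pos.1 hr0)).2 hw |>.trans hrε

theorem U_mn_open_general {X : Type*} [MeasurableSpace X]
    (μ : Measure X) [IsProbabilityMeasure μ] (S : Aut X μ)
    (A : ℕ → Set X) (hAm : ∀ i, MeasurableSet (A i))
    (A₂ : ℕ → Set (X × X))
    (hA₂d : ∀ B : Set (X × X), MeasurableSet B → ∀ ε > (0 : ℝ),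
      ∃ i, (μ.prod μ) (symmDiff B (A₂ i)) < ENNReal.ofReal ε)
    (m n : ℕ) :
    IsOpenWrt (fun E F : SkewExt S => halmos A₂ E.prod F.prod)
      {E : SkewExt S |
        0 < μ {x : X | halmos A (cocycle S E.T x n) (Aut.id μ) < 1 / m}} := by
  refine isOpenWrt_of_forall_eventually fun E hE => ?_
  simp only [halmos_lt_iff_ehalmos_lt, ofReal_halmos] at hE ⊢
  have hle (F : SkewExt S) (x : X) : ehalmos A (cocycle S F.T x n) (Aut.id μ) ≤
      ehalmos A (cocycle S E.T x n) (Aut.id μ) +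
        ehalmos A (cocycle S E.T x n) (cocycle S F.T x n) := by
    rw [add_comm, ehalmos_comm A (cocycle S E.T x n) (cocycle S F.T x n)]
    exact ehalmos_le_add A (cocycle S F.T x n) (cocycle S E.T x n) (Aut.id μ)
  have := eventually_measure_lt_pos (fun F => SkewExt.measurable_ehalmos_cocycle hAm E F n)
    (SkewExt.tendsto_lintegral_ehalmos_cocycle hAm hA₂d E n) hle hE
  rwa [halmosNhds, comap_comap] at this

/-- For fixed `m, n ≥ 1`, the set
`U_(m,n) = {R ∈ Ext(S) : μ {x : ρ(C(x,n,R), Id) < 1/m} > 0}` is open in `Ext(S)`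
w.r.t. the Halmos metric. -/
theorem U_mn_open {X : Type*} [MeasurableSpace X] [StandardBorelSpace X]
    (μ : Measure X) [IsProbabilityMeasure μ] (S : Aut X μ)
    (A : ℕ → Set X) (hAm : ∀ i, MeasurableSet (A i))
    (hAd : ∀ B : Set X, MeasurableSet B → ∀ ε > (0 : ℝ),
      ∃ i, μ (symmDiff B (A i)) < ENNReal.ofReal ε)
    (A₂ : ℕ → Set (X × X)) (hA₂m : ∀ i, MeasurableSet (A₂ i))
    (hA₂d : ∀ B : Set (X × X), MeasurableSet B → ∀ ε > (0 : ℝ),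
      ∃ i, (μ.prod μ) (symmDiff B (A₂ i)) < ENNReal.ofReal ε)
    (m n : ℕ) (hm : 1 ≤ m) (hn : 1 ≤ n) :
    IsOpenWrt (fun E F : SkewExt S => halmos A₂ E.prod F.prod)
      {E : SkewExt S |
        0 < μ {x : X | halmos A (cocycle S E.T x n) (Aut.id μ) < 1 / m}} :=
  U_mn_open_general μ S A hAm A₂ hA₂d m n
end

section
/- Every extension R = J^{-1}(S × Id)J with J = (Id, J_x) given by a simple (countably-valued, piecewise constant) family {J_x} is recurrent: R ∈ Rec(S). -/
open MeasureTheory Set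

lemma Aut.ext' {X : Type*} [MeasurableSpace X] {μ : Measure X} {a b : Aut X μ}
    (h : a.toEquiv = b.toEquiv) : a = b := by
  cases a; cases b; simpa using h

lemma cocycle_telescope {X : Type*} [MeasurableSpace X] {μ : Measure X}
    (S : Aut X μ) (Jx : X → Aut X μ) (T : X → Aut X μ)
    (hT : ∀ x : X, T x = ((Jx (S.toEquiv x)).inv).comp (Jx x)) (x : X) :
    ∀ n : ℕ, cocycle S T x n = ((Jx (S.toEquiv^[n] x)).inv).comp (Jx x) := by
  intro n
  induction n with
  | zero =>
    apply Aut.ext'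
    ext y
    simp [cocycle, Aut.id, Aut.comp, Aut.inv]
  | succ n ih =>
    apply Aut.ext'
    ext y
    simp only [cocycle, ih, hT, Aut.comp, Aut.inv, MeasurableEquiv.trans_apply]
    rw [Function.iterate_succ_apply']
    simp

lemma halmos_self {X : Type*} [MeasurableSpace X] {μ : Measure X}
    (A : ℕ → Set X) (T : Aut X μ) : halmos A T T = 0 := by
  simp [halmos, symmDiff_self]

/-- Every extension `R = J⁻¹(S × Id)J` with `J = (Id, J_x)` given by a simple
(countably-valued, piecewise constant) family `J_x` is recurrent: `R ∈ Rec(S)`. -/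
theorem simple_conjugate_is_recurrent {X : Type*} [MeasurableSpace X] [StandardBorelSpace X]
    (μ : Measure X) [IsProbabilityMeasure μ] (S : Aut X μ)
    (A : ℕ → Set X) (hAm : ∀ i, MeasurableSet (A i))
    (hAd : ∀ B : Set X, MeasurableSet B → ∀ ε > (0 : ℝ),
      ∃ i, μ (symmDiff B (A i)) < ENNReal.ofReal ε)
    (B : ℕ → Set X) (hBm : ∀ k, MeasurableSet (B k))
    (hBd : Pairwise (Function.onFun Disjoint B)) (hBu : ⋃ k, B k = univ)
    (Jx : X → Aut X μ) (Jf : ℕ → Aut X μ)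
    (hJ : ∀ k, ∀ x ∈ B k, Jx x = Jf k)
    (E : SkewExt S)
    (hT : ∀ x : X, E.T x = ((Jx (S.toEquiv x)).inv).comp (Jx x)) :
    ∀ m : ℕ, 1 ≤ m → ∀ N : ℕ, ∃ n > N,
      0 < μ {x : X | halmos A (cocycle S E.T x n) (Aut.id μ) < 1 / m} := by
  intro m hm N
  -- choose a piece of positive measure
  obtain ⟨k, hk⟩ : ∃ k, μ (B k) ≠ 0 := by
    by_contra h
    push_neg at h
    have : μ (⋃ k, B k) = 0 := by
      exact (measure_iUnion_null_iff).2 h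
    rw [hBu, measure_univ] at this
    exact one_ne_zero this
  have hcons : MeasureTheory.Conservative (S.toEquiv) μ := by
    have := S.mp
    exact this.conservative
  obtain ⟨n, hnN, hn0⟩ := hcons.exists_gt_measure_inter_ne_zero
    ((hBm k).nullMeasurableSet) hk N
  refine ⟨n, hnN, ?_⟩
  have hsub : B k ∩ (⇑S.toEquiv)^[n] ⁻¹' B k ⊆
      {x : X | halmos A (cocycle S E.T x n) (Aut.id μ) < 1 / m} := by
    intro x hx
    have hx1 : Jx x = Jf k := hJ k x hx.1
    have hx2 : Jx ((⇑S.toEquiv)^[n] x) = Jf k := hJ k _ hx.2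
    have hc : cocycle S E.T x n = Aut.id μ := by
      rw [cocycle_telescope S Jx E.T hT x n, hx1, hx2]
      apply Aut.ext'
      ext y
      simp [Aut.comp, Aut.inv, Aut.id]
    have : halmos A (cocycle S E.T x n) (Aut.id μ) = 0 := by
      rw [hc]; exact halmos_self A _
    have hmpos : (0 : ℝ) < 1 / m := by
      apply one_div_pos.2
      exact_mod_cast Nat.lt_of_lt_of_le Nat.zero_lt_one hm
    simpa [this] using hmpos
  calc (0 : ENNReal) < μ (B k ∩ (⇑S.toEquiv)^[n] ⁻¹' B k) := pos_iff_ne_zero.2 hn0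
    _ ≤ _ := measure_mono hsub
end
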